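/- Let A = P₁ − R₁ + S₁ = P₂ − R₂ + S₂ be two double proper weak splittings of A ∈ ℝ^{m×n}. If Â†P̂ ≥ 0 where Â = (I − S₂P₁†)A and P̂ = P₂, N(S₂) ⊇ N(P₂), R(S₂) ⊆ R(P₂), and I − S₂P₁† is nonsingular, then ρ(W₁₂) < 1. -/

import Mathlib

open Matrix

/-- Spectral radius of a real square matrix: the maximum modulus of its complex eigenvalues. -/
noncomputable def specRad {ι : Type*} [Fintype ι] [DecidableEq ι] (M : Matrix ι ι ℝ) : ℝ :=
  sSup ((fun z : ℂ => ‖z‖) '' spectrum ℂ (M.map Complex.ofReal))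

/-- `X` satisfies the four Penrose equations for `A`, i.e. `X` is the Moore-Penrose
inverse of `A`. -/
def IsMP {m n : ℕ} (A : Matrix (Fin m) (Fin n) ℝ) (X : Matrix (Fin n) (Fin m) ℝ) : Prop :=
  A * X * A = A ∧ X * A * X = X ∧ (A * X)ᵀ = A * X ∧ (X * A)ᵀ = X * A

/-- Entrywise comparison of matrices: `MatLE A B` means `A ≤ B` entrywise. -/
def MatLE {m n : ℕ} (A B : Matrix (Fin m) (Fin n) ℝ) : Prop := ∀ i j, A i j ≤ B i j

/-!
The blocks `H = P₂†R₂ - P₂†S₂P₁†R₁` and `K = P₂†S₂P₁†S₁` of `W₁₂` are entrywise nonnegative, and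
an eigenvalue `z` of `W₁₂` with `|z| ≥ 1` yields, through the moduli of the lower half of its
eigenvector, a vector `y ≥ 0`, `y ≠ 0` with `y ≤ (H + K) y`.

Since `N(P₁) ⊆ N(S₂)` gives `S₂P₁†P₁ = S₂`, the sum `H + K` equals `T = P₂†(P₂ - Â)`, the iteration
matrix of the proper splitting `Â = P₂ - (P₂ - Â)`. The nonnegative matrix `G = Â†P₂` satisfies
`G(I - T)T = T`, because `G(I - T) = Â†Â = P₂†P₂` (orthogonal projections with the same kernel).
For `w = Ty` this gives `y ≤ w ≤ Tw` and `w = G(w - Tw) ≤ 0`, hence `y = 0`.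
-/

namespace Matrix

section Kernels

variable {l m n o R : Type*} [Fintype m] [Fintype n] [CommRing R]

theorem mul_eq_zero_iff_range_le_ker (M : Matrix l m R) (N : Matrix m n R) :
    M * N = 0 ↔ LinearMap.range N.mulVecLin ≤ LinearMap.ker M.mulVecLin := by
  classical
  rw [LinearMap.range_le_ker_iff, ← mulVecLin_mul, ← toLin'_apply', LinearEquiv.map_eq_zero_iff]

theorem mul_eq_zero_of_ker_le {A : Matrix l m R} {B : Matrix o m R} {C : Matrix m n R}
    (h : LinearMap.ker A.mulVecLin ≤ LinearMap.ker B.mulVecLin) (hAC : A * C = 0) : B * C = 0 :=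
  (mul_eq_zero_iff_range_le_ker B C).2 (((mul_eq_zero_iff_range_le_ker A C).1 hAC).trans h)

theorem mul_eq_zero_of_range_le [Fintype l] {A : Matrix l m R} {B : Matrix l n R} {C : Matrix o l R}
    (h : LinearMap.range B.mulVecLin ≤ LinearMap.range A.mulVecLin) (hCA : C * A = 0) :
    C * B = 0 :=
  (mul_eq_zero_iff_range_le_ker C B).2 (h.trans ((mul_eq_zero_iff_range_le_ker C A).1 hCA))

theorem ker_mulVecLin_mul_of_isUnit [Fintype l] [DecidableEq l] {U : Matrix l l R} (hU : IsUnit U)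
    (A : Matrix l m R) : LinearMap.ker (U * A).mulVecLin = LinearMap.ker A.mulVecLin := by
  refine (mulVecLin_mul U A).symm ▸ LinearMap.ker_comp_of_ker_eq_bot _ ?_
  refine ker_mulVecLin_eq_bot_iff.2 fun v hv => ?_
  obtain ⟨V, hVU⟩ := hU.exists_left_inv
  rw [← one_mulVec v, ← hVU, ← mulVec_mulVec, hv, mulVec_zero]

theorem range_mulVecLin_one_sub_mul_le [Fintype l] [DecidableEq l] {A P S : Matrix l m R}
    (X : Matrix m l R)
    (hA : LinearMap.range A.mulVecLin ≤ LinearMap.range P.mulVecLin)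
    (hS : LinearMap.range S.mulVecLin ≤ LinearMap.range P.mulVecLin) :
    LinearMap.range ((1 - S * X) * A).mulVecLin ≤ LinearMap.range P.mulVecLin := by
  rintro _ ⟨x, rfl⟩
  rw [mulVecLin_apply, Matrix.sub_mul, Matrix.one_mul, sub_mulVec, Matrix.mul_assoc,
    ← mulVec_mulVec]
  exact sub_mem (hA (LinearMap.mem_range_self _ x)) (hS (LinearMap.mem_range_self _ _))

end Kernels

section Nonneg

variable {l m n R : Type*} [Fintype m] [Ring R] [PartialOrder R] [IsOrderedRing R]

theorem mul_apply_nonpos {A : Matrix l m R} {B : Matrix m n R} (hA : ∀ i j, A i j ≤ 0)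
    (hB : ∀ i j, 0 ≤ B i j) (i : l) (j : n) : (A * B) i j ≤ 0 :=
  Finset.sum_nonpos fun k _ => mul_nonpos_of_nonpos_of_nonneg (hA i k) (hB k j)

theorem mul_apply_nonneg_of_nonpos {A : Matrix l m R} {B : Matrix m n R} (hA : ∀ i j, A i j ≤ 0)
    (hB : ∀ i j, B i j ≤ 0) (i : l) (j : n) : 0 ≤ (A * B) i j :=
  Finset.sum_nonneg fun k _ => mul_nonneg_of_nonpos_of_nonpos (hA i k) (hB k j)

theorem mulVec_mono_of_nonneg {A : Matrix l m R} (hA : ∀ i j, 0 ≤ A i j) {x y : m → R}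
    (hxy : x ≤ y) : A *ᵥ x ≤ A *ᵥ y := fun i =>
  Finset.sum_le_sum fun j _ => mul_le_mul_of_nonneg_left (hxy j) (hA i j)

theorem eq_zero_of_le_mulVec [DecidableEq m] {T G : Matrix m m R} (hT : ∀ i j, 0 ≤ T i j)
    (hG : ∀ i j, 0 ≤ G i j) (hGT : G * (1 - T) * T = T) {y : m → R} (hy : 0 ≤ y)
    (hyT : y ≤ T *ᵥ y) : y = 0 := by
  set w := T *ᵥ y
  have hwTw : w ≤ T *ᵥ w := mulVec_mono_of_nonneg hT hyT
  have hw : G *ᵥ (w - T *ᵥ w) = w := by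
    have : w - T *ᵥ w = (1 - T) *ᵥ w := by rw [sub_mulVec, one_mulVec]
    rw [this, mulVec_mulVec, mulVec_mulVec, hGT]
  have hw_nonpos : w ≤ 0 := by
    rw [← hw, ← mulVec_zero G]
    exact mulVec_mono_of_nonneg hG (sub_nonpos.2 hwTw)
  exact le_antisymm (hyT.trans hw_nonpos) hy

end Nonneg

section Complex

variable {ι κ : Type*} [Fintype ι]

theorem norm_map_ofReal_mulVec_le {M : Matrix κ ι ℝ} (hM : ∀ i j, 0 ≤ M i j) (v : ι → ℂ)
    (i : κ) : ‖(M.map Complex.ofReal *ᵥ v) i‖ ≤ (M *ᵥ fun j => ‖v j‖) i := by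
  refine (norm_sum_le _ _).trans_eq (Finset.sum_congr rfl fun j _ => ?_)
  change ‖(M i j : ℂ) * v j‖ = M i j * ‖v j‖
  rw [norm_mul, Complex.norm_real, Real.norm_of_nonneg (hM i j)]

theorem exists_mulVec_eq_smul_of_mem_spectrum {K : Type*} [Field K] [DecidableEq ι]
    {M : Matrix ι ι K} {z : K} (hz : z ∈ spectrum K M) : ∃ v ≠ 0, M *ᵥ v = z • v := by
  rw [← spectrum_toLin', ← Module.End.hasEigenvalue_iff_mem_spectrum] at hz
  obtain ⟨v, hv⟩ := hz.exists_hasEigenvector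
  exact ⟨v, hv.2, hv.apply_eq_smul⟩

theorem exists_sq_smul_eq_of_mem_spectrum_fromBlocks {K : Type*} [Field K] [DecidableEq ι]
    {A B : Matrix ι ι K} {z : K} (hz : z ∈ spectrum K (fromBlocks A B (1 : Matrix ι ι K) 0)) :
    ∃ u ≠ 0, z ^ 2 • u = z • (A *ᵥ u) + B *ᵥ u := by
  obtain ⟨v, hv0, hv⟩ := exists_mulVec_eq_smul_of_mem_spectrum hz
  rw [fromBlocks_mulVec] at hv
  have hv₁ : v ∘ Sum.inl = z • (v ∘ Sum.inr) :=
    funext fun i => by simpa using congr_fun hv (Sum.inr i)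
  refine ⟨v ∘ Sum.inr, fun h => hv0 ?_, funext fun i => ?_⟩
  · ext (i | i)
    · simpa [h] using congr_fun hv₁ i
    · exact congr_fun h i
  · have := congr_fun hv (Sum.inl i)
    simp only [Sum.elim_inl, hv₁, mulVec_smul] at this
    rw [this, Pi.smul_apply, Pi.smul_apply, sq, mul_smul]
    exact congr_arg (z • ·) (congr_fun hv₁ i).symm

theorem norm_le_mulVec_of_sq_smul_eq {H K : Matrix ι ι ℝ} (hH : ∀ i j, 0 ≤ H i j)
    (hK : ∀ i j, 0 ≤ K i j) {z : ℂ} (hz1 : 1 ≤ ‖z‖) {u : ι → ℂ}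
    (hu : z ^ 2 • u = z • (H.map Complex.ofReal *ᵥ u) + K.map Complex.ofReal *ᵥ u) :
    (fun i => ‖u i‖) ≤ (H + K) *ᵥ fun i => ‖u i‖ := by
  intro i
  have hy : (0 : ι → ℝ) ≤ fun i => ‖u i‖ := fun i => norm_nonneg _
  have hHy : 0 ≤ (H *ᵥ fun i => ‖u i‖) i := by simpa using mulVec_mono_of_nonneg hH hy i
  have hKy : 0 ≤ (K *ᵥ fun i => ‖u i‖) i := by simpa using mulVec_mono_of_nonneg hK hy i
  refine le_of_mul_le_mul_left ?_ (by positivity : 0 < ‖z‖ ^ 2)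
  calc ‖z‖ ^ 2 * ‖u i‖ = ‖z * (H.map Complex.ofReal *ᵥ u) i + (K.map Complex.ofReal *ᵥ u) i‖ := by
        rw [← norm_pow, ← norm_mul]
        exact congr_arg norm (congr_fun hu i)
    _ ≤ ‖z‖ * (H *ᵥ fun i => ‖u i‖) i + (K *ᵥ fun i => ‖u i‖) i := by
        refine (norm_add_le _ _).trans (add_le_add ?_ (norm_map_ofReal_mulVec_le hK u i))
        rw [norm_mul]
        exact mul_le_mul_of_nonneg_left (norm_map_ofReal_mulVec_le hH u i) (norm_nonneg z)
    _ ≤ ‖z‖ ^ 2 * ((H + K) *ᵥ fun i => ‖u i‖) i := by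
        have h1 : ‖z‖ ≤ ‖z‖ ^ 2 := by nlinarith
        have h2 : 1 ≤ ‖z‖ ^ 2 := by nlinarith
        rw [add_mulVec, Pi.add_apply]
        linarith [mul_le_mul_of_nonneg_right h1 hHy, mul_le_mul_of_nonneg_right h2 hKy]

theorem exists_le_mulVec_of_mem_spectrum_fromBlocks [DecidableEq ι] {H K : Matrix ι ι ℝ}
    (hH : ∀ i j, 0 ≤ H i j) (hK : ∀ i j, 0 ≤ K i j) {z : ℂ}
    (hz : z ∈ spectrum ℂ ((fromBlocks H K (1 : Matrix ι ι ℝ) 0).map Complex.ofReal))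
    (hz1 : 1 ≤ ‖z‖) : ∃ y : ι → ℝ, 0 ≤ y ∧ y ≠ 0 ∧ y ≤ (H + K) *ᵥ y := by
  rw [fromBlocks_map, Matrix.map_one _ Complex.ofReal_zero Complex.ofReal_one,
    Matrix.map_zero _ Complex.ofReal_zero] at hz
  obtain ⟨u, hu0, hu⟩ := exists_sq_smul_eq_of_mem_spectrum_fromBlocks hz
  refine ⟨fun i => ‖u i‖, fun i => norm_nonneg _, fun h => hu0 ?_,
    norm_le_mulVec_of_sq_smul_eq hH hK hz1 hu⟩
  exact funext fun i => norm_eq_zero.1 (congr_fun h i)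

end Complex

end Matrix

theorem specRad_lt {ι : Type*} [Fintype ι] [DecidableEq ι] (M : Matrix ι ι ℝ) {c : ℝ}
    (hc : 0 < c) (h : ∀ z ∈ spectrum ℂ (M.map Complex.ofReal), ‖z‖ < c) : specRad M < c := by
  rcases (spectrum ℂ (M.map Complex.ofReal)).eq_empty_or_nonempty with he | hne
  · simpa [specRad, he] using hc
  · obtain ⟨z, hz, hmax⟩ :=
      (hne.image fun z : ℂ => ‖z‖).csSup_mem ((finite_spectrum _).image _)
    rw [specRad, ← hmax]
    exact h z hz

namespace IsMP

variable {m n : ℕ} {A B P : Matrix (Fin m) (Fin n) ℝ} {X Y : Matrix (Fin n) (Fin m) ℝ}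

theorem mul_mul_eq_of_ker_le (hX : IsMP P X)
    (h : LinearMap.ker P.mulVecLin ≤ LinearMap.ker B.mulVecLin) : B * X * P = B := by
  have hP : P * (1 - X * P) = 0 := by
    rw [Matrix.mul_sub, ← Matrix.mul_assoc, hX.1, Matrix.mul_one, sub_self]
  have := mul_eq_zero_of_ker_le h hP
  rwa [Matrix.mul_sub, Matrix.mul_one, sub_eq_zero, eq_comm, ← Matrix.mul_assoc] at this

theorem mul_mul_eq_of_range_le (hX : IsMP P X)
    (h : LinearMap.range B.mulVecLin ≤ LinearMap.range P.mulVecLin) : P * X * B = B := by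
  have hP : (1 - P * X) * P = 0 := by rw [Matrix.sub_mul, hX.1, Matrix.one_mul, sub_self]
  have := mul_eq_zero_of_range_le h hP
  rwa [Matrix.sub_mul, Matrix.one_mul, sub_eq_zero, eq_comm] at this

theorem mul_eq_of_ker_eq (hX : IsMP A X) (hY : IsMP B Y)
    (h : LinearMap.ker A.mulVecLin = LinearMap.ker B.mulVecLin) : X * A = Y * B := by
  have hYB : Y * B * (X * A) = Y * B := by
    rw [Matrix.mul_assoc, ← Matrix.mul_assoc B, hX.mul_mul_eq_of_ker_le h.le]
  have hXA : X * A * (Y * B) = X * A := by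
    rw [Matrix.mul_assoc, ← Matrix.mul_assoc A, hY.mul_mul_eq_of_ker_le h.ge]
  calc X * A = (X * A * (Y * B))ᵀ := by rw [hXA, hX.2.2.2]
    _ = Y * B := by rw [transpose_mul, hX.2.2.2, hY.2.2.2, hYB]

end IsMP

theorem Matrix.doubleSplitting_blocks_add_eq {m n R : Type*} [Fintype m] [Fintype n]
    [DecidableEq m] [CommRing R] {A P₁ R₁ S₁ P₂ R₂ S₂ : Matrix m n R} {X₁ X₂ : Matrix n m R}
    (h₁ : A = P₁ - R₁ + S₁) (h₂ : A = P₂ - R₂ + S₂) (hSXP : S₂ * X₁ * P₁ = S₂) :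
    X₂ * R₂ - X₂ * S₂ * X₁ * R₁ + X₂ * S₂ * X₁ * S₁ = X₂ * (P₂ - (1 - S₂ * X₁) * A) := by
  have hR₁ : R₁ = P₁ - A + S₁ := by rw [h₁]; abel
  have hR₂ : R₂ = P₂ - A + S₂ := by rw [h₂]; abel
  rw [Matrix.mul_assoc] at hSXP
  simp only [hR₁, hR₂, Matrix.mul_add, Matrix.mul_sub, Matrix.sub_mul, Matrix.one_mul,
    Matrix.mul_assoc, hSXP]
  abel

theorem eq_zero_of_le_pinv_mul_mulVec {m n : ℕ} {A P : Matrix (Fin m) (Fin n) ℝ}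
    {X Y : Matrix (Fin n) (Fin m) ℝ} (hX : IsMP P X) (hY : IsMP A Y)
    (hrange : LinearMap.range A.mulVecLin ≤ LinearMap.range P.mulVecLin)
    (hker : LinearMap.ker A.mulVecLin = LinearMap.ker P.mulVecLin)
    (hXR : MatLE 0 (X * (P - A))) (hYP : MatLE 0 (Y * P)) {y : Fin n → ℝ} (hy : 0 ≤ y)
    (hyT : y ≤ (X * (P - A)) *ᵥ y) : y = 0 := by
  refine eq_zero_of_le_mulVec hXR hYP ?_ hy hyT
  have hPT : P * (X * (P - A)) = P - A := by
    rw [← Matrix.mul_assoc, Matrix.mul_sub, hX.1, hX.mul_mul_eq_of_range_le hrange]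
  calc Y * P * (1 - X * (P - A)) * (X * (P - A)) = Y * A * (X * (P - A)) := by
        rw [Matrix.mul_assoc Y P, Matrix.mul_sub, Matrix.mul_one, hPT, sub_sub_cancel]
    _ = X * (P - A) := by
        rw [hY.mul_eq_of_ker_eq hX hker, ← Matrix.mul_assoc, hX.2.1]

theorem tgads_convergence_weak_general {m n : ℕ}
    (A P₁ R₁ S₁ P₂ R₂ S₂ : Matrix (Fin m) (Fin n) ℝ)
    (X₁ X₂ Xhat : Matrix (Fin n) (Fin m) ℝ)
    (hX₁ : IsMP P₁ X₁)
    (hX₂ : IsMP P₂ X₂)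
    (hsplit₁ : A = P₁ - R₁ + S₁)
    (hker₁ : LinearMap.ker (P₁).mulVecLin = LinearMap.ker (A).mulVecLin)
    (hw₁a : MatLE 0 (X₁ * R₁))
    (hw₁b : MatLE (X₁ * S₁) 0)
    (hsplit₂ : A = P₂ - R₂ + S₂)
    (hrange₂ : LinearMap.range (P₂).mulVecLin = LinearMap.range (A).mulVecLin)
    (hker₂ : LinearMap.ker (P₂).mulVecLin = LinearMap.ker (A).mulVecLin)
    (hw₂a : MatLE 0 (X₂ * R₂))
    (hw₂b : MatLE (X₂ * S₂) 0)
    (hNS : LinearMap.ker (P₂).mulVecLin ≤ LinearMap.ker (S₂).mulVecLin)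
    (hRS : LinearMap.range (S₂).mulVecLin ≤ LinearMap.range (P₂).mulVecLin)
    (hunit : IsUnit (1 - S₂ * X₁))
    (hXhat : IsMP ((1 - S₂ * X₁) * A) Xhat)
    (hXhatP : MatLE 0 (Xhat * P₂))
    : specRad (Matrix.fromBlocks (X₂ * R₂ - X₂ * S₂ * X₁ * R₁) (X₂ * S₂ * X₁ * S₁) 1 0) < 1 := by
  set Ahat := (1 - S₂ * X₁) * A
  have hSXP : S₂ * X₁ * P₁ = S₂ := hX₁.mul_mul_eq_of_ker_le (hker₁ ▸ hker₂ ▸ hNS)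
  have hT : X₂ * R₂ - X₂ * S₂ * X₁ * R₁ + X₂ * S₂ * X₁ * S₁ = X₂ * (P₂ - Ahat) :=
    doubleSplitting_blocks_add_eq hsplit₁ hsplit₂ hSXP
  have hH : ∀ i j, 0 ≤ (X₂ * R₂ - X₂ * S₂ * X₁ * R₁) i j := fun i j => by
    have hSR := mul_apply_nonpos hw₂b hw₁a i j
    have hXR : 0 ≤ (X₂ * R₂) i j := hw₂a i j
    rw [← Matrix.mul_assoc] at hSR
    rw [Matrix.sub_apply]
    linarith
  have hK : ∀ i j, 0 ≤ (X₂ * S₂ * X₁ * S₁) i j := fun i j => by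
    simpa only [← Matrix.mul_assoc] using mul_apply_nonneg_of_nonpos hw₂b hw₁b i j
  have hkerAhat : LinearMap.ker Ahat.mulVecLin = LinearMap.ker P₂.mulVecLin :=
    (ker_mulVecLin_mul_of_isUnit hunit A).trans hker₂.symm
  refine specRad_lt _ one_pos fun z hz => ?_
  by_contra! hz1
  obtain ⟨y, hy, hy0, hyT⟩ := exists_le_mulVec_of_mem_spectrum_fromBlocks hH hK hz hz1
  rw [hT] at hyT
  exact hy0 (eq_zero_of_le_pinv_mul_mulVec hX₂ hXhat
    (range_mulVecLin_one_sub_mul_le X₁ hrange₂.ge hRS) hkerAhat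
    (fun i j => hT ▸ add_nonneg (hH i j) (hK i j)) hXhatP hy hyT)

theorem tgads_convergence_weak {m n : ℕ}
    (A P₁ R₁ S₁ P₂ R₂ S₂ : Matrix (Fin m) (Fin n) ℝ)
    (X₁ X₂ Xhat : Matrix (Fin n) (Fin m) ℝ)
    (hX₁ : IsMP P₁ X₁)
    (hX₂ : IsMP P₂ X₂)
    (hsplit₁ : A = P₁ - R₁ + S₁)
    (hrange₁ : LinearMap.range (P₁).mulVecLin = LinearMap.range (A).mulVecLin)
    (hker₁ : LinearMap.ker (P₁).mulVecLin = LinearMap.ker (A).mulVecLin)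
    (hw₁a : MatLE 0 (X₁ * R₁))
    (hw₁b : MatLE (X₁ * S₁) 0)
    (hsplit₂ : A = P₂ - R₂ + S₂)
    (hrange₂ : LinearMap.range (P₂).mulVecLin = LinearMap.range (A).mulVecLin)
    (hker₂ : LinearMap.ker (P₂).mulVecLin = LinearMap.ker (A).mulVecLin)
    (hw₂a : MatLE 0 (X₂ * R₂))
    (hw₂b : MatLE (X₂ * S₂) 0)
    (hNS : LinearMap.ker (P₂).mulVecLin ≤ LinearMap.ker (S₂).mulVecLin)
    (hRS : LinearMap.range (S₂).mulVecLin ≤ LinearMap.range (P₂).mulVecLin)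
    (hunit : IsUnit (1 - S₂ * X₁))
    (hXhat : IsMP ((1 - S₂ * X₁) * A) Xhat)
    (hXhatP : MatLE 0 (Xhat * P₂))
    : specRad (Matrix.fromBlocks (X₂ * R₂ - X₂ * S₂ * X₁ * R₁) (X₂ * S₂ * X₁ * S₁) 1 0) < 1 :=
  tgads_convergence_weak_general A P₁ R₁ S₁ P₂ R₂ S₂ X₁ X₂ Xhat hX₁ hX₂ hsplit₁ hker₁ hw₁a hw₁b
    hsplit₂ hrange₂ hker₂ hw₂a hw₂b hNS hRS hunit hXhat hXhatP
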